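/- arXiv:1911.05467 — 2 statements merged into one kernel-verified Lean document; each statement's English description precedes it below -/
import Mathlib

section
/- For all real numbers c₀, c₁, c₂ there exists a σ₂-network Φ with input dimension 1, output dimension 1, exactly one hidden layer of 6 neurons, whose realization satisfies R(Φ)(x) = c₀ + c₁ T₁(x) + c₂ T₂(x) for all real x. -/
/-!
Since `σ₂(u) + σ₂(-u) = u²`, a pair of σ₂-neurons realizes a square exactly. The target
`c₀ + c₁ x + c₂ (2x² - 1)` is a linear combination of `x²`, `(x + 1)²` and `1`, so four
neurons suffice; the remaining two get zero weight.
-/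

open scoped Classical

noncomputable section

/-- Chebyshev polynomials of the first kind, as functions `ℝ → ℝ`:
`T 0 x = 1`, `T 1 x = x`, `T (n+2) x = 2x * T (n+1) x - T n x`. -/
def chebT : ℕ → ℝ → ℝ
  | 0, _ => 1
  | 1, x => x
  | n + 2, x => 2 * x * chebT (n + 1) x - chebT n x

/-- Rectified power unit `σ_s(x) = max(0,x)^s`. -/
def repu (s : ℕ) (x : ℝ) : ℝ := (max 0 x) ^ s

/-- A feed-forward neural network with `L` layers: layer widths `width 0, …, width L`
(`width 0` is the input dimension, `width L` the output dimension), weight matrices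
`A k` and bias vectors `b k` for `k = 1, …, L` (entries outside the relevant ranges
are irrelevant). -/
structure Net where
  L : ℕ
  width : ℕ → ℕ
  A : ℕ → ℕ → ℕ → ℝ
  b : ℕ → ℕ → ℝ

namespace Net

/-- The state `x_k` of the network on input `x` with activation `σ`:
`x_0 = x`, `x_{k+1} = σ(A_{k+1} x_k + b_{k+1})` componentwise. -/
def fwd (σ : ℝ → ℝ) (Φ : Net) (x : ℕ → ℝ) : ℕ → ℕ → ℝ
  | 0 => x
  | k + 1 => fun i =>
      σ ((∑ j ∈ Finset.range (Φ.width k), Φ.A (k + 1) i j * Φ.fwd σ x k j) + Φ.b (k + 1) i)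

/-- The realization `R(Φ)(x) = A_L x_{L-1} + b_L` (no activation on the last layer). -/
def realize (σ : ℝ → ℝ) (Φ : Net) (x : ℕ → ℝ) : ℕ → ℝ := fun i =>
  (∑ j ∈ Finset.range (Φ.width (Φ.L - 1)), Φ.A Φ.L i j * Φ.fwd σ x (Φ.L - 1) j) + Φ.b Φ.L i

/-- Number of hidden layers. -/
def hiddenLayers (Φ : Net) : ℕ := Φ.L - 1

/-- Number of neurons (activation functions): total width of the hidden layers. -/
def neurons (Φ : Net) : ℕ := ∑ k ∈ Finset.Ico 1 Φ.L, Φ.width k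

/-- Number of nonzero weights: nonzero entries of all the `A_k` and `b_k`. -/
def nonzeroWeights (Φ : Net) : ℕ :=
  ∑ k ∈ Finset.Icc 1 Φ.L,
    ((((Finset.range (Φ.width k)) ×ˢ (Finset.range (Φ.width (k - 1)))).filter
        (fun p => Φ.A k p.1 p.2 ≠ 0)).card
      + ((Finset.range (Φ.width k)).filter (fun i => Φ.b k i ≠ 0)).card)

end Net

namespace Net

def shallow (n : ℕ) (a β w : ℕ → ℝ) (d : ℝ) : Net where
  L := 2
  width k := if k = 1 then n else 1
  A k i j := if k = 1 then a i else w j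
  b k i := if k = 1 then β i else d

theorem realize_shallow (σ : ℝ → ℝ) (n : ℕ) (a β w : ℕ → ℝ) (d x : ℝ) :
    (shallow n a β w d).realize σ (fun _ => x) 0 = ∑ i ∈ Finset.range n, w i * σ (a i * x + β i) + d := by
  simp [realize, fwd, shallow]

end Net

theorem repu_two_add_repu_two_neg (u : ℝ) : repu 2 u + repu 2 (-u) = u ^ 2 := by
  rcases le_total 0 u with hu | hu
  · simp [repu, hu]
  · simp [repu, hu]

/-- `c₀ + c₁ T₁ + c₂ T₂` is realized by a σ₂-network with one hidden
layer of 6 neurons. -/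
theorem stmt_4 (c₀ c₁ c₂ : ℝ) :
    ∃ Φ : Net,
      Φ.L = 2 ∧
      Φ.width 0 = 1 ∧
      Φ.width 1 = 6 ∧
      Φ.width 2 = 1 ∧
      ∀ x : ℝ, Φ.realize (repu 2) (fun _ => x) 0 =
        c₀ + c₁ * chebT 1 x + c₂ * chebT 2 x := by
  refine ⟨Net.shallow 6 (fun | 0 | 2 => 1 | 1 | 3 => -1 | _ => 0) (fun | 2 => 1 | 3 => -1 | _ => 0)
    (fun | 0 | 1 => 2 * c₂ - c₁ / 2 | 2 | 3 => c₁ / 2 | _ => 0) (c₀ - c₂ - c₁ / 2),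
    rfl, rfl, rfl, rfl, fun x => ?_⟩
  rw [Net.realize_shallow]
  simp only [Finset.sum_range_succ, Finset.sum_range_zero, chebT]
  have hx := repu_two_add_repu_two_neg x
  have hx₁ := repu_two_add_repu_two_neg (x + 1)
  rw [neg_add] at hx₁
  norm_num
  linear_combination (2 * c₂ - c₁ / 2) * hx + c₁ / 2 * hx₁
end
end

section
/- Let s ≥ 2 and r ≥ 1 be integers and let k be an integer with 1 ≤ k ≤ s − 1. Then for all real x, T_{rs+k}(x) = 2 ∑_{i=1}^{r} δ⁻_{r−i} ( T_{is}(x)·T_k(x) − T_{(i−1)s}(x)·T_{s−k}(x) ) + δ⁺_r · T_{s−k}(x) + δ⁻_r · T_k(x). -/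
open scoped Classical

noncomputable section

/-- `δ⁻_r = (1 + (-1)^r)/2`: equals 1 if `r` is even, 0 if `r` is odd. -/
def deltaM (r : ℕ) : ℝ := (1 + (-1 : ℝ) ^ r) / 2

/-- `δ⁺_r = (1 - (-1)^r)/2`: equals 1 if `r` is odd, 0 if `r` is even. -/
def deltaP (r : ℕ) : ℝ := (1 - (-1 : ℝ) ^ r) / 2

/-
The product formula `2 T_m T_n = T_{m+n} + T_{m-n}`, read over all integer indices via
`T_{-n} = T_n`, turns the `i`-th summand into the difference `g i - g (i - 2)` of
`g i = T_{is+k}` (for `i = 1` this uses `T_{k-s} = T_{s-k}`). The sum weighted by `δ⁻_{r-i}`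
keeps only the `i` of the parity of `r`, so it telescopes to `g r` minus `g 0 = T_k` or
`g (-1) = T_{s-k}`, which the last two terms restore.
-/

open Polynomial Finset

lemma chebT_eq_eval_T (n : ℕ) (x : ℝ) : chebT n x = (Chebyshev.T ℝ n).eval x := by
  induction n using Nat.twoStepInduction with
  | zero => simp [chebT]
  | one => simp [chebT]
  | more n ih₀ ih₁ =>
    rw [chebT, ih₀, ih₁, show ((n + 2 : ℕ) : ℤ) = n + 2 by push_cast; ring, Chebyshev.T_add_two]
    simp

lemma deltaM_add_two (r : ℕ) : deltaM (r + 2) = deltaM r := by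
  simp [deltaM, pow_succ]

lemma deltaP_add_two (r : ℕ) : deltaP (r + 2) = deltaP r := by
  simp [deltaP, pow_succ]

lemma sum_Icc_deltaM_mul_sub_two (g : ℤ → ℝ) (r : ℕ) :
    ∑ i ∈ Icc 1 r, deltaM (r - i) * (g i - g (i - 2)) =
      g r - deltaM r * g 0 - deltaP r * g (-1) := by
  induction r using Nat.twoStepInduction with
  | zero => simp [deltaM, deltaP]
  | one => norm_num [deltaM, deltaP]
  | more r ih _ =>
    have hshift : ∑ i ∈ Icc 1 r, deltaM (r + 2 - i) * (g i - g (i - 2)) =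
        ∑ i ∈ Icc 1 r, deltaM (r - i) * (g i - g (i - 2)) := by
      refine sum_congr rfl fun i hi => ?_
      rw [show r + 2 - i = r - i + 2 by have := (mem_Icc.mp hi).2; omega, deltaM_add_two]
    rw [sum_Icc_succ_top (by omega), sum_Icc_succ_top (by omega), hshift, ih,
      deltaM_add_two, deltaP_add_two, show r + 2 - (r + 1) = 1 by omega, Nat.sub_self]
    norm_num [deltaM, add_assoc, one_add_one_eq_two]
    ring

lemma Chebyshev.two_mul_T_mul_T_sub_T_mul_T {R : Type*} [CommRing R] (i s k : ℤ) :
    2 * (Chebyshev.T R (i * s) * Chebyshev.T R k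
        - Chebyshev.T R ((i - 1) * s) * Chebyshev.T R (s - k)) =
      Chebyshev.T R (i * s + k) - Chebyshev.T R ((i - 2) * s + k) := by
  have h₁ := Chebyshev.T_mul_T R (i * s) k
  have h₂ := Chebyshev.T_mul_T R ((i - 1) * s) (s - k)
  rw [show (i - 1) * s + (s - k) = i * s - k by ring,
    show (i - 1) * s - (s - k) = (i - 2) * s + k by ring] at h₂
  linear_combination h₁ - h₂

theorem stmt_10_general (s : ℕ) (r : ℕ) (k : ℕ) (hk2 : k ≤ s - 1) (x : ℝ) :
    chebT (r * s + k) x =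
      2 * ∑ i ∈ Finset.Icc 1 r,
            deltaM (r - i) * (chebT (i * s) x * chebT k x
              - chebT ((i - 1) * s) x * chebT (s - k) x)
        + deltaP r * chebT (s - k) x + deltaM r * chebT k x := by
  set g : ℤ → ℝ := fun i => (Chebyshev.T ℝ (i * s + k)).eval x
  have hsk : ((s - k : ℕ) : ℤ) = s - k := by omega
  have hsummand : ∀ i ∈ Icc 1 r, 2 * (deltaM (r - i) * (chebT (i * s) x * chebT k x
      - chebT ((i - 1) * s) x * chebT (s - k) x)) = deltaM (r - i) * (g i - g (i - 2)) := by
    intro i hi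
    have hi₁ : ((i - 1 : ℕ) : ℤ) = i - 1 := by have := (mem_Icc.mp hi).1; omega
    have := congrArg (eval x) (Chebyshev.two_mul_T_mul_T_sub_T_mul_T (R := ℝ) i s k)
    simp only [eval_mul, eval_sub, eval_ofNat] at this
    simp only [chebT_eq_eval_T, Nat.cast_mul, hi₁, hsk, g, ← this]
    ring
  have hg₀ : g 0 = chebT k x := by simp [g, chebT_eq_eval_T]
  have hg₁ : g (-1) = chebT (s - k) x := by
    rw [chebT_eq_eval_T, hsk, ← Chebyshev.T_neg]
    simp only [g]
    ring_nf
  rw [mul_sum, sum_congr rfl hsummand, sum_Icc_deltaM_mul_sub_two, hg₀, hg₁]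
  simp only [g, chebT_eq_eval_T]
  push_cast
  ring

/-- expansion of `T_{rs+k}` (Lemma on Chebyshev expansion). -/
theorem stmt_10 (s : ℕ) (hs : 2 ≤ s) (r : ℕ) (hr : 1 ≤ r) (k : ℕ)
    (hk1 : 1 ≤ k) (hk2 : k ≤ s - 1) (x : ℝ) :
    chebT (r * s + k) x =
      2 * ∑ i ∈ Finset.Icc 1 r,
            deltaM (r - i) * (chebT (i * s) x * chebT k x
              - chebT ((i - 1) * s) x * chebT (s - k) x)
        + deltaP r * chebT (s - k) x + deltaM r * chebT k x :=
  stmt_10_general s r k hk2 x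
end
end
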